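/- With the weight function g of the previous context (parameters α, β with α ∈ (0,1), β^{1−α} ≥ 1/2), for every positive s the slack sensitivity satisfies γ(s, g(s)) := max_i sqrt(e_iᵀ Aₛ (Aₛᵀ G Aₛ)^{-1} Aₛᵀ e_i) ≤ 2, where G = Diag(g(s)) and Aₛ = S^{-1}A. -/

import Mathlib

open Matrix Finset

variable {m n : ℕ}

/-- entry formula -/
lemma aux_entry (B : Matrix (Fin m) (Fin n) ℝ) (d : Fin m → ℝ) (k l : Fin n) :
    (Bᵀ * Matrix.diagonal d * B) k l = ∑ j, d j * (B j k * B j l) := by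
  rw [Matrix.mul_apply]
  congr 1; ext j
  rw [Matrix.mul_diagonal, Matrix.transpose_apply]
  ring

/-- quadratic form formula -/
lemma aux_quadform (B : Matrix (Fin m) (Fin n) ℝ) (d : Fin m → ℝ) (x : Fin n → ℝ) :
    x ⬝ᵥ ((Bᵀ * Matrix.diagonal d * B) *ᵥ x) = ∑ j, d j * (B *ᵥ x) j ^ 2 := by
  rw [Matrix.mul_assoc, ← Matrix.mulVec_mulVec, ← Matrix.mulVec_mulVec,
    Matrix.dotProduct_mulVec, Matrix.vecMul_transpose]
  simp only [Matrix.mulVec_diagonal, dotProduct]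
  congr 1; ext j
  ring

/-- positive definiteness -/
lemma aux_posdef (B : Matrix (Fin m) (Fin n) ℝ) (hB : Function.Injective B.mulVec)
    (d : Fin m → ℝ) (hd : ∀ j, 0 < d j) : (Bᵀ * Matrix.diagonal d * B).PosDef := by
  refine Matrix.PosDef.of_dotProduct_mulVec_pos ?_ ?_
  · unfold Matrix.IsHermitian
    rw [Matrix.conjTranspose_eq_transpose_of_trivial, Matrix.transpose_mul, Matrix.transpose_mul,
      Matrix.transpose_transpose, Matrix.diagonal_transpose, Matrix.mul_assoc]
  · intro x hx
    rw [star_trivial, aux_quadform]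
    have hBx : B *ᵥ x ≠ 0 := by
      intro h
      apply hx
      apply hB
      rw [h, Matrix.mulVec_zero]
    obtain ⟨j, hj⟩ := Function.ne_iff.mp hBx
    apply Finset.sum_pos' (fun j _ => mul_nonneg (hd j).le (sq_nonneg _))
    exact ⟨j, Finset.mem_univ j, mul_pos (hd j)
      (lt_of_le_of_ne (sq_nonneg _) (Ne.symm (pow_ne_zero 2 hj)))⟩

lemma aux_mulVec_inv (M : Matrix (Fin n) (Fin n) ℝ) (hM : M.PosDef) (a : Fin n → ℝ) :
    M *ᵥ (M⁻¹ *ᵥ a) = a := by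
  rw [Matrix.mulVec_mulVec, Matrix.mul_nonsing_inv _ (isUnit_iff_ne_zero.2 hM.det_pos.ne'),
    Matrix.one_mulVec]

lemma aux_symm (M : Matrix (Fin n) (Fin n) ℝ) (hM : M.IsHermitian) (x y : Fin n → ℝ) :
    x ⬝ᵥ (M *ᵥ y) = y ⬝ᵥ (M *ᵥ x) := by
  have hMt : Mᵀ = M := by
    rw [← Matrix.conjTranspose_eq_transpose_of_trivial]; exact hM
  rw [Matrix.dotProduct_mulVec]
  rw [show x ᵥ* M = M *ᵥ x from by rw [← hMt, Matrix.vecMul_transpose, hMt]]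
  exact dotProduct_comm _ _

/-- variational characterization -/
lemma aux_var (M : Matrix (Fin n) (Fin n) ℝ) (hM : M.PosDef) (a x : Fin n → ℝ) :
    2 * (a ⬝ᵥ x) - x ⬝ᵥ (M *ᵥ x) ≤ a ⬝ᵥ (M⁻¹ *ᵥ a) := by
  set y := M⁻¹ *ᵥ a with hy
  have hMy : M *ᵥ y = a := aux_mulVec_inv M hM a
  have h0 : 0 ≤ (x - y) ⬝ᵥ (M *ᵥ (x - y)) := by
    have := hM.posSemidef.dotProduct_mulVec_nonneg (x - y); rwa [star_trivial] at this
  have hexp : (x - y) ⬝ᵥ (M *ᵥ (x - y)) =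
      x ⬝ᵥ (M *ᵥ x) - 2 * (a ⬝ᵥ x) + a ⬝ᵥ y := by
    rw [Matrix.mulVec_sub, dotProduct_sub, sub_dotProduct, sub_dotProduct,
      aux_symm M hM.isHermitian y x, hMy]
    have : y ⬝ᵥ a = a ⬝ᵥ y := dotProduct_comm _ _
    have h2 : x ⬝ᵥ a = a ⬝ᵥ x := dotProduct_comm _ _
    rw [this, h2]; ring
  rw [hexp] at h0
  linarith

lemma aux_self (M : Matrix (Fin n) (Fin n) ℝ) (hM : M.PosDef) (a : Fin n → ℝ) :
    (M⁻¹ *ᵥ a) ⬝ᵥ (M *ᵥ (M⁻¹ *ᵥ a)) = a ⬝ᵥ (M⁻¹ *ᵥ a) := by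
  rw [aux_mulVec_inv M hM a, dotProduct_comm]

/-- monotonicity of inverse quadratic forms -/
lemma aux_mono (M N : Matrix (Fin n) (Fin n) ℝ) (hM : M.PosDef) (hN : N.PosDef)
    (h : ∀ x, x ⬝ᵥ (M *ᵥ x) ≤ x ⬝ᵥ (N *ᵥ x)) (a : Fin n → ℝ) :
    a ⬝ᵥ (N⁻¹ *ᵥ a) ≤ a ⬝ᵥ (M⁻¹ *ᵥ a) := by
  set y := N⁻¹ *ᵥ a with hy
  have h1 : a ⬝ᵥ (N⁻¹ *ᵥ a) = 2 * (a ⬝ᵥ y) - y ⬝ᵥ (N *ᵥ y) := by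
    rw [← hy]
    have := aux_self N hN a
    rw [← hy] at this
    rw [this]; ring
  calc a ⬝ᵥ (N⁻¹ *ᵥ a) = 2 * (a ⬝ᵥ y) - y ⬝ᵥ (N *ᵥ y) := h1
    _ ≤ 2 * (a ⬝ᵥ y) - y ⬝ᵥ (M *ᵥ y) := by linarith [h y]
    _ ≤ a ⬝ᵥ (M⁻¹ *ᵥ a) := aux_var M hM a y

/-- leverage score bound -/
lemma aux_lev (M : Matrix (Fin n) (Fin n) ℝ) (hM : M.PosDef) (a : Fin n → ℝ) {c : ℝ}
    (hc : 0 < c) (h : ∀ x, c * (a ⬝ᵥ x) ^ 2 ≤ x ⬝ᵥ (M *ᵥ x)) :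
    c * (a ⬝ᵥ (M⁻¹ *ᵥ a)) ≤ 1 := by
  set y := M⁻¹ *ᵥ a with hy
  have h1 := h y
  have h2 : y ⬝ᵥ (M *ᵥ y) = a ⬝ᵥ y := aux_self M hM a
  rw [h2] at h1
  set t := a ⬝ᵥ y with ht
  nlinarith [sq_nonneg (c * t - 1)]

/-- rank one determinant update -/
lemma aux_det_rankone (M : Matrix (Fin n) (Fin n) ℝ) (hM : M.PosDef) (a : Fin n → ℝ) (k : ℝ) :
    (M + k • Matrix.vecMulVec a a).det = M.det * (1 + k * (a ⬝ᵥ (M⁻¹ *ᵥ a))) := by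
  have hdet : IsUnit M.det := isUnit_iff_ne_zero.2 hM.det_pos.ne'
  have h1 : k • Matrix.vecMulVec a a = Matrix.replicateCol Unit (k • a) * Matrix.replicateRow Unit a := by
    rw [Matrix.vecMulVec_eq Unit, ← Matrix.smul_mul]
    congr 1
  have h3 : (1 + Matrix.replicateRow Unit a * M⁻¹ * Matrix.replicateCol Unit (k • a)).det
      = 1 + k * (a ⬝ᵥ (M⁻¹ *ᵥ a)) := by
    rw [Matrix.det_unique, Matrix.add_apply, Matrix.one_apply_eq, Matrix.mul_assoc,
      ← Matrix.replicateCol_mulVec, Matrix.mulVec_smul, Matrix.replicateRow_mul_replicateCol_apply, dotProduct_smul,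
      smul_eq_mul]
  rw [h1, Matrix.det_add_replicateCol_mul_replicateRow hdet, h3]

/-- diagonal update decomposition -/
lemma aux_update (B : Matrix (Fin m) (Fin n) ℝ) (u : Fin m → ℝ) (i : Fin m) (x : ℝ) :
    Bᵀ * Matrix.diagonal (Function.update u i x) * B =
      Bᵀ * Matrix.diagonal u * B + (x - u i) • Matrix.vecMulVec (B i) (B i) := by
  ext k l
  rw [Matrix.add_apply, aux_entry, aux_entry, Matrix.smul_apply, Matrix.vecMulVec_apply,
    smul_eq_mul]
  have h1 : ∀ j, Function.update u i x j * (B j k * B j l) =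
      Function.update (fun j => u j * (B j k * B j l)) i (x * (B i k * B i l)) j := by
    intro j
    rcases eq_or_ne j i with h | h
    · subst h; simp
    · simp [Function.update_of_ne h]
  rw [Finset.sum_congr rfl (fun j _ => h1 j), Finset.sum_update_of_mem (Finset.mem_univ i),
    ← Finset.add_sum_erase _ _ (Finset.mem_univ i), Finset.erase_eq]
  ring

lemma aux_inj (A : Matrix (Fin m) (Fin n) ℝ) (hrank : A.rank = n) :
    Function.Injective A.mulVec := by
  rw [Matrix.rank] at hrank
  have h2 := LinearMap.finrank_range_add_finrank_ker A.mulVecLin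
  rw [hrank, Module.finrank_pi, Fintype.card_fin] at h2
  have h3 : Module.finrank ℝ (LinearMap.ker A.mulVecLin) = 0 := by omega
  have h4 : LinearMap.ker A.mulVecLin = ⊥ := Submodule.finrank_eq_zero.mp h3
  have h5 := LinearMap.ker_eq_bot.mp h4
  intro x y hxy
  exact h5 hxy
open Matrix

theorem weight_function_slack_sensitivity {m n : ℕ}
    (A : Matrix (Fin m) (Fin n) ℝ) (hrank : A.rank = n) (hnm : n ≤ m)
    (s : Fin m → ℝ) (hs : ∀ i, 0 < s i)
    (α β : ℝ) (hα : α ∈ Set.Ioo (0 : ℝ) 1) (hβ : β ∈ Set.Ioo (0 : ℝ) 1)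
    (hβα : (1 : ℝ) / 2 ≤ β ^ (1 - α))
    (As : Matrix (Fin m) (Fin n) ℝ) (hAs : As = (Matrix.diagonal s)⁻¹ * A)
    (f : (Fin m → ℝ) → ℝ)
    (hf : f = fun w => (∑ i, w i) -
        (1 / α) * Real.log (Asᵀ * Matrix.diagonal (fun i => w i ^ α) * As).det -
        β * ∑ i, Real.log (w i))
    (g : Fin m → ℝ) (hg : ∀ i, 0 < g i)
    (hgmin : IsMinOn f {w | ∀ i, 0 < w i} g) :
    ∀ i, Real.sqrt ((fun l => As i l) ⬝ᵥ
        ((Asᵀ * Matrix.diagonal g * As)⁻¹ *ᵥ fun l => As i l)) ≤ 2 := by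
  obtain ⟨hα0, hα1⟩ := hα
  obtain ⟨hβ0, hβ1⟩ := hβ
  -- injectivity of As.mulVec
  have hAinj : Function.Injective A.mulVec := aux_inj A hrank
  have hsdet : IsUnit (Matrix.diagonal s).det := by
    rw [Matrix.det_diagonal]
    exact isUnit_iff_ne_zero.2 (Finset.prod_ne_zero_iff.2 fun i _ => (hs i).ne')
  have hcancel : ∀ z, Matrix.diagonal s *ᵥ (As *ᵥ z) = A *ᵥ z := by
    intro z
    rw [Matrix.mulVec_mulVec, hAs, Matrix.mul_nonsing_inv_cancel_left _ _ hsdet]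
  have hAsinj : Function.Injective As.mulVec := by
    intro x y hxy
    apply hAinj
    rw [← hcancel x, ← hcancel y, hxy]
  -- positive definite matrices
  have hu : ∀ j, (0:ℝ) < g j ^ α := fun j => Real.rpow_pos_of_pos (hg j) α
  set Mu : Matrix (Fin n) (Fin n) ℝ := Asᵀ * Matrix.diagonal (fun j => g j ^ α) * As with hMudef
  set Mg : Matrix (Fin n) (Fin n) ℝ := Asᵀ * Matrix.diagonal g * As with hMgdef
  have hMu : Mu.PosDef := aux_posdef As hAsinj _ hu
  have hMg : Mg.PosDef := aux_posdef As hAsinj _ hg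
  set τ : Fin m → ℝ := fun i => As i ⬝ᵥ (Mu⁻¹ *ᵥ As i) with hτdef
  have hτ0 : ∀ i, 0 ≤ τ i := by
    intro i
    have := hMu.inv.posSemidef.dotProduct_mulVec_nonneg (As i)
    rwa [star_trivial] at this
  -- stationarity
  have hstat : ∀ i, g i = g i ^ α * τ i + β := by
    intro i
    have hdMpos : 0 < Mu.det := hMu.det_pos
    have hdet : ∀ t : ℝ,
        (Asᵀ * Matrix.diagonal (fun j => Function.update g i t j ^ α) * As).det
          = Mu.det * (1 + (t ^ α - g i ^ α) * τ i) := by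
      intro t
      have h6 : (fun j => Function.update g i t j ^ α)
          = Function.update (fun j => g j ^ α) i (t ^ α) := by
        funext j
        rcases eq_or_ne j i with h | h
        · subst h; simp
        · rw [Function.update_of_ne h, Function.update_of_ne h]
      rw [h6, aux_update As (fun j => g j ^ α) i (t ^ α), ← hMudef,
        aux_det_rankone Mu hMu (As i) _]
    set C1 := ∑ j ∈ Finset.univ \ {i}, g j with hC1
    set C2 := ∑ j ∈ Finset.univ \ {i}, Real.log (g j) with hC2
    set ψ : ℝ → ℝ := fun t => (t + C1)
        - (1/α) * Real.log (Mu.det * (1 + (t ^ α - g i ^ α) * τ i))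
        - β * (Real.log t + C2) with hψ
    have heq : ∀ t ∈ Set.Ioi (0:ℝ), f (Function.update g i t) = ψ t := by
      intro t ht
      have hsum1 : ∑ j, Function.update g i t j = t + C1 :=
        Finset.sum_update_of_mem (Finset.mem_univ i) g t
      have hsum2 : ∑ j, Real.log (Function.update g i t j) = Real.log t + C2 := by
        have h9 : (fun j => Real.log (Function.update g i t j))
            = Function.update (fun j => Real.log (g j)) i (Real.log t) := by
          funext j
          rcases eq_or_ne j i with h | h
          · subst h; simp
          · rw [Function.update_of_ne h, Function.update_of_ne h]
        calc ∑ j, Real.log (Function.update g i t j)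
            = ∑ j, Function.update (fun j => Real.log (g j)) i (Real.log t) j := by rw [h9]
          _ = Real.log t + C2 :=
              Finset.sum_update_of_mem (Finset.mem_univ i) (fun j => Real.log (g j)) (Real.log t)
      simp only [hf, hψ]
      rw [hsum1, hsum2, hdet t]
    have hmem : Set.Ioi (0:ℝ) ∈ nhds (g i) := isOpen_Ioi.mem_nhds (hg i)
    have hlocmin : IsLocalMin ψ (g i) := by
      have hψg : ψ (g i) = f g := by
        rw [← heq (g i) (hg i), Function.update_eq_self]
      filter_upwards [hmem] with t ht
      rw [hψg, ← heq t ht]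
      apply hgmin
      intro j
      rcases eq_or_ne j i with h | h
      · subst h; simpa using ht
      · rw [Function.update_of_ne h]; exact hg j
    have hder : HasDerivAt ψ
        (1 - (1/α) * (Mu.det * ((α * g i ^ (α - 1)) * τ i)
          / (Mu.det * (1 + (g i ^ α - g i ^ α) * τ i))) - β * (g i)⁻¹) (g i) := by
      have h1 : HasDerivAt (fun t : ℝ => t + C1) 1 (g i) := (hasDerivAt_id _).add_const C1
      have hrpow : HasDerivAt (fun t : ℝ => t ^ α) (α * g i ^ (α - 1)) (g i) :=
        Real.hasDerivAt_rpow_const (Or.inl (hg i).ne')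
      have hinner : HasDerivAt (fun t : ℝ => Mu.det * (1 + (t ^ α - g i ^ α) * τ i))
          (Mu.det * ((α * g i ^ (α - 1)) * τ i)) (g i) :=
        (((hrpow.sub_const _).mul_const (τ i)).const_add 1).const_mul Mu.det
      have hne : Mu.det * (1 + (g i ^ α - g i ^ α) * τ i) ≠ 0 := by
        simp [hdMpos.ne']
      have hlog1 := hinner.log hne
      have hlog2 : HasDerivAt (fun t : ℝ => Real.log t + C2) (g i)⁻¹ (g i) :=
        (Real.hasDerivAt_log (hg i).ne').add_const C2
      exact (h1.sub (hlog1.const_mul (1/α))).sub (hlog2.const_mul β)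
    have hd0 := hlocmin.hasDerivAt_eq_zero hder
    have hpow : g i ^ (α - 1) * g i = g i ^ α := by
      rw [← Real.rpow_add_one (hg i).ne' (α - 1)]
      norm_num
    have hgne : g i ≠ 0 := (hg i).ne'
    have hαne : α ≠ 0 := hα0.ne'
    rw [sub_self, zero_mul, add_zero, mul_one] at hd0
    rw [mul_div_cancel_left₀ _ hdMpos.ne'] at hd0
    have h1 : (1/α) * (α * g i ^ (α - 1) * τ i) = g i ^ (α - 1) * τ i := by
      field_simp
    rw [h1] at hd0
    linear_combination g i * hd0 + τ i * hpow + β * mul_inv_cancel₀ hgne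
  -- leverage bound
  have hlev : ∀ i, g i ^ α * τ i ≤ 1 := by
    intro i
    apply aux_lev Mu hMu (As i) (hu i)
    intro x
    rw [hMudef, aux_quadform]
    exact Finset.single_le_sum (f := fun j => g j ^ α * (As *ᵥ x) j ^ 2)
      (fun j _ => mul_nonneg (hu j).le (sq_nonneg _)) (Finset.mem_univ i)
  have hgβ : ∀ i, β ≤ g i := by
    intro i
    nlinarith [hstat i, mul_nonneg (hu i).le (hτ0 i)]
  have hg2 : ∀ i, g i ≤ 2 := by
    intro i
    nlinarith [hstat i, hlev i]
  -- comparison matrix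
  intro i
  set N : Matrix (Fin n) (Fin n) ℝ := Asᵀ * Matrix.diagonal (fun j => g j ^ α / 2) * As with hNdef
  have hN : N.PosDef := aux_posdef As hAsinj _ (fun j => div_pos (hu j) two_pos)
  have hcmp : ∀ x, x ⬝ᵥ (N *ᵥ x) ≤ x ⬝ᵥ (Mg *ᵥ x) := by
    intro x
    rw [hNdef, hMgdef, aux_quadform, aux_quadform]
    apply Finset.sum_le_sum
    intro j _
    apply mul_le_mul_of_nonneg_right _ (sq_nonneg _)
    -- g j ^ α / 2 ≤ g j
    have h12 : (1:ℝ)/2 ≤ g j ^ (1 - α) :=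
      le_trans hβα (Real.rpow_le_rpow hβ0.le (hgβ j) (by linarith))
    have h13 : g j ^ (1 - α) * g j ^ α = g j := by
      rw [← Real.rpow_add (hg j)]
      norm_num
    nlinarith [hu j, h12, h13]
  have hNeq : N = (1/2 : ℝ) • Mu := by
    have hdiag : Matrix.diagonal (fun j => g j ^ α / 2)
        = (1/2 : ℝ) • Matrix.diagonal (fun j => g j ^ α) := by
      ext k l
      rw [Matrix.smul_apply, Matrix.diagonal_apply, Matrix.diagonal_apply, smul_eq_mul]
      split_ifs with h
      · ring
      · ring
    rw [hNdef, hMudef, hdiag, Matrix.mul_smul, Matrix.smul_mul]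
  have hNinv : N⁻¹ = (2:ℝ) • Mu⁻¹ := by
    apply Matrix.inv_eq_right_inv
    rw [hNeq, Matrix.smul_mul, Matrix.mul_smul, smul_smul,
      Matrix.mul_nonsing_inv _ (isUnit_iff_ne_zero.2 hMu.det_pos.ne')]
    norm_num
  have hbound : As i ⬝ᵥ (Mg⁻¹ *ᵥ As i) ≤ 2 * τ i := by
    have := aux_mono N Mg hN hMg hcmp (As i)
    rw [hNinv, Matrix.smul_mulVec, dotProduct_smul, smul_eq_mul] at this
    exact this
  -- final chain
  have hτle : τ i ≤ g i ^ (1 - α) := by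
    have h1 : g i ^ α * τ i ≤ g i := by nlinarith [hstat i]
    have h2 : g i ^ α * g i ^ (1 - α) = g i := by
      rw [← Real.rpow_add (hg i)]
      norm_num
    nlinarith [hu i]
  have h14 : g i ^ (1 - α) ≤ 2 ^ (1 - α) :=
    Real.rpow_le_rpow (hg i).le (hg2 i) (by linarith)
  have h15 : (2:ℝ) ^ (1 - α) ≤ 2 := by
    calc (2:ℝ) ^ (1 - α) ≤ 2 ^ (1:ℝ) :=
          Real.rpow_le_rpow_of_exponent_le one_le_two (by linarith)
      _ = 2 := Real.rpow_one 2
  have hT4 : As i ⬝ᵥ (Mg⁻¹ *ᵥ As i) ≤ 4 := by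
    calc As i ⬝ᵥ (Mg⁻¹ *ᵥ As i) ≤ 2 * τ i := hbound
      _ ≤ 2 * 2 := by nlinarith
      _ = 4 := by norm_num
  calc Real.sqrt ((fun l => As i l) ⬝ᵥ (Mg⁻¹ *ᵥ fun l => As i l))
      ≤ Real.sqrt 4 := Real.sqrt_le_sqrt hT4
    _ = 2 := by
        rw [show (4:ℝ) = 2^2 by norm_num, Real.sqrt_sq (by norm_num : (0:ℝ) ≤ 2)]
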